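/- arXiv:0908.1605 — 2 statements merged into one kernel-verified Lean document; each statement's English description precedes it below -/
import Mathlib

section
/- For every Borel probability measure μ on Cantor space, the set {x ∈ 2^ω : μ^x ⊥ μ} is comeagre in 2^ω. -/
open MeasureTheory Finset

def ind (b : Bool) : ℝ := if b then 1 else 0


/-- The basic clopen (cylinder) set `N_s` determined by a finite binary string `s`. -/
def cyl (s : List Bool) : Set (ℕ → Bool) :=
  {x | ∀ i, i < s.length → x i = s.getD i false}

/-- The Kechris–Sofronidis parameter `α^x(n)`. -/
noncomputable def alpha (x : ℕ → Bool) (n : ℕ) : ℝ :=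
  if x n then (1/4) * (1 + 1 / Real.sqrt (n+1)) else 1/4

/-- The code `f^x` of the product measure `μ^x`:
`f^x(s) = ∏_{k<|s|} [(1−s(k))α^x(k) + s(k)(1−α^x(k))]`. -/
noncomputable def bernWeight (x : ℕ → Bool) (s : List Bool) : ℝ :=
  ∏ k ∈ Finset.range s.length, (if s.getD k false then 1 - alpha x k else alpha x k)

noncomputable def qk (x : ℕ → Bool) (n : ℕ) (b : Bool) : ℝ :=
  if b then 1 - alpha x n else alpha x n

noncomputable def Wt' (x : ℕ → Bool) (N : ℕ) (s : Fin N → Bool) : ℝ :=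
  ∏ i : Fin N, qk x i.val (s i)

def extN (N : ℕ) (s : Fin N → Bool) : ℕ → Bool :=
  fun n => if h : n < N then s ⟨n, h⟩ else false

noncomputable def gdStr (N : ℕ) (E : Set (ℕ → Bool)) : Finset (Fin N → Bool) :=
  @Finset.filter _ (fun s => extN N s ∈ E) (Classical.decPred _) Finset.univ

lemma mem_gdStr {N : ℕ} {E : Set (ℕ → Bool)} {s : Fin N → Bool} :
    s ∈ gdStr N E ↔ extN N s ∈ E := by
  simp [gdStr]

lemma alpha_nonneg (x : ℕ → Bool) (n : ℕ) : 0 ≤ alpha x n := by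
  unfold alpha
  have h1 : 0 < Real.sqrt (n+1) := Real.sqrt_pos.2 (by positivity)
  split <;> positivity

lemma alpha_le_half (x : ℕ → Bool) (n : ℕ) : alpha x n ≤ 1/2 := by
  unfold alpha
  have h1 : (1:ℝ) ≤ Real.sqrt (n+1) := by
    rw [show (1:ℝ) = Real.sqrt 1 by simp]
    exact Real.sqrt_le_sqrt (by norm_num)
  have h2 : 1 / Real.sqrt (n+1) ≤ 1 := by
    rw [div_le_one (by linarith)]; exact h1
  split <;> linarith

lemma qk_nonneg (x : ℕ → Bool) (n : ℕ) (b : Bool) : 0 ≤ qk x n b := by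
  unfold qk; have := alpha_nonneg x n; have := alpha_le_half x n
  split <;> linarith

lemma qk_sum (x : ℕ → Bool) (n : ℕ) : qk x n false + qk x n true = 1 := by
  simp [qk]

lemma Wt'_nonneg (x : ℕ → Bool) (N : ℕ) (s : Fin N → Bool) : 0 ≤ Wt' x N s :=
  Finset.prod_nonneg fun i _ => qk_nonneg x i (s i)

lemma bernWeight_ofFn (x : ℕ → Bool) (N : ℕ) (s : Fin N → Bool) :
    bernWeight x (List.ofFn s) = Wt' x N s := by
  unfold bernWeight Wt'
  rw [List.length_ofFn, ← Fin.prod_univ_eq_prod_range]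
  refine Finset.prod_congr rfl fun i _ => ?_
  rw [List.getD_eq_getElem _ _ (by simpa using i.isLt)]
  simp [qk]

lemma measurable_cyl (s : List Bool) : MeasurableSet (cyl s) := by
  have : cyl s = ⋂ i ∈ Finset.range s.length, (fun x : ℕ → Bool => x i) ⁻¹' {s.getD i false} := by
    ext y; simp [cyl]
  rw [this]
  exact MeasurableSet.biInter (Set.to_countable _)
    (fun i _ => (measurable_pi_apply i) (MeasurableSet.singleton _))

lemma rep_of_determined {N : ℕ} {E : Set (ℕ → Bool)}
    (hE : ∀ y z : ℕ → Bool, (∀ i < N, y i = z i) → (y ∈ E ↔ z ∈ E)) :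
    E = ⋃ s ∈ gdStr N E, cyl (List.ofFn s) := by
  ext y
  constructor
  · intro hy
    have h1 : (fun i : Fin N => y i) ∈ gdStr N E :=
      mem_gdStr.2 ((hE _ _ (fun i hi => by simp [extN, hi])).2 hy)
    refine Set.mem_biUnion h1 ?_
    · intro i hi
      rw [List.length_ofFn] at hi
      rw [List.getD_eq_getElem _ _ (by simpa using hi)]
      simp
  · intro hy
    obtain ⟨s, hs, hy2⟩ := Set.mem_iUnion₂.1 hy
    have hs' := mem_gdStr.1 hs
    refine (hE y (extN N s) ?_).2 hs'
    intro i hi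
    have := hy2 i (by simpa [List.length_ofFn] using hi)
    rw [List.getD_eq_getElem _ _ (by simpa [List.length_ofFn] using hi)] at this
    simp only [List.getElem_ofFn] at this
    simp [extN, hi, this]

lemma measurable_of_determined {N : ℕ} {E : Set (ℕ → Bool)}
    (hE : ∀ y z : ℕ → Bool, (∀ i < N, y i = z i) → (y ∈ E ↔ z ∈ E)) :
    MeasurableSet E := by
  rw [rep_of_determined hE]
  exact (gdStr N E).measurableSet_biUnion (fun s _ => measurable_cyl _)

lemma phi_eval (Φ : (ℕ → Bool) → Measure (ℕ → Bool))
    (hΦ : ∀ x : ℕ → Bool, ∀ s : List Bool,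
      Φ x (cyl s) = ENNReal.ofReal (bernWeight x s))
    (x : ℕ → Bool) (N : ℕ) (E : Set (ℕ → Bool))
    (hE : ∀ y z : ℕ → Bool, (∀ i < N, y i = z i) → (y ∈ E ↔ z ∈ E)) :
    Φ x E = ENNReal.ofReal (∑ s ∈ gdStr N E, Wt' x N s) := by
  classical
  conv_lhs => rw [rep_of_determined hE]
  rw [measure_biUnion_finset ?_ (fun s _ => measurable_cyl _)]
  · exact (Finset.sum_congr rfl (fun s _ => by rw [hΦ, bernWeight_ofFn])).trans
      (ENNReal.ofReal_sum_of_nonneg (fun s _ => Wt'_nonneg x N s)).symm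
  · intro s _ t _ hst
    simp only [Function.onFun]
    rw [Set.disjoint_left]
    intro y hys hyt
    apply hst
    funext i
    have h1 := hys i (by simpa using i.isLt)
    have h2 := hyt i (by simpa using i.isLt)
    rw [List.getD_eq_getElem _ _ (by simpa using i.isLt)] at h1 h2
    simp only [List.getElem_ofFn] at h1 h2
    rw [← h1, ← h2]


section Cheb
variable {N : ℕ}

lemma sum_prod_factor (g : Fin N → Bool → ℝ) :
    ∑ s : Fin N → Bool, ∏ i, g i (s i) = ∏ i, (g i false + g i true) := by
  rw [← Fintype.piFinset_univ, ← Finset.prod_univ_sum]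
  congr 1; ext i; simp [Fintype.sum_bool, add_comm]

variable (q : Fin N → Bool → ℝ)

/-- weight of a string -/
def Wt (s : Fin N → Bool) : ℝ := ∏ i, q i (s i)


lemma cov_eq (hs : ∀ i, q i false + q i true = 1)
    (i j : Fin N) :
    ∑ s : Fin N → Bool, Wt q s * ((ind (s i) - q i true) * (ind (s j) - q j true))
      = if i = j then q i true * q i false else 0 := by
  classical
  have key : ∀ s : Fin N → Bool,
      Wt q s * ((ind (s i) - q i true) * (ind (s j) - q j true))
        = ∏ k, (fun k b => (q k b * ((if k = i then ind b - q k true else 1) *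
            (if k = j then ind b - q k true else 1)))) k (s k) := by
    intro s
    simp only []
    rw [Finset.prod_mul_distrib, Finset.prod_mul_distrib]
    simp [Wt, Finset.prod_ite_eq', mul_comm, mul_assoc, mul_left_comm]
  rw [Finset.sum_congr rfl (fun s _ => key s), sum_prod_factor
    (fun k b => (q k b * ((if k = i then ind b - q k true else 1) *
      (if k = j then ind b - q k true else 1))))]
  by_cases hij : i = j
  · subst hij
    rw [Finset.prod_eq_single i]
    · have hf : q i false = 1 - q i true := by linarith [hs i]
      simp only [if_pos rfl, ind, Bool.false_eq_true, if_false, if_true, hf]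
      ring
    · intro k _ hk
      simp [hk, hs k]
    · simp
  · have hf : q i false = 1 - q i true := by linarith [hs i]
    rw [Finset.prod_eq_zero (Finset.mem_univ i) (by simp [hij, ind, hf]; ring)]
    simp [hij]
end Cheb

section C2
variable {N : ℕ} (q : Fin N → Bool → ℝ) (v : Fin N → ℝ)

lemma var_eq (hs : ∀ i, q i false + q i true = 1) :
    ∑ s : Fin N → Bool, Wt q s * (∑ i, v i * (ind (s i) - q i true))^2
      = ∑ i, (v i)^2 * (q i true * q i false) := by
  classical
  have expand : ∀ s : Fin N → Bool,
      Wt q s * (∑ i, v i * (ind (s i) - q i true))^2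
        = ∑ i, ∑ j, (v i * v j) *
            (Wt q s * ((ind (s i) - q i true) * (ind (s j) - q j true))) := by
    intro s
    rw [sq, Finset.sum_mul_sum]
    rw [Finset.mul_sum]
    refine Finset.sum_congr rfl fun i _ => ?_
    rw [Finset.mul_sum]
    refine Finset.sum_congr rfl fun j _ => ?_
    ring
  rw [Finset.sum_congr rfl (fun s _ => expand s)]
  rw [Finset.sum_comm]
  have : ∀ i : Fin N, ∑ s : Fin N → Bool, ∑ j, (v i * v j) *
      (Wt q s * ((ind (s i) - q i true) * (ind (s j) - q j true)))
      = (v i)^2 * (q i true * q i false) := by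
    intro i
    rw [Finset.sum_comm]
    have : ∀ j : Fin N, ∑ s : Fin N → Bool, (v i * v j) *
        (Wt q s * ((ind (s i) - q i true) * (ind (s j) - q j true)))
        = (v i * v j) * (if i = j then q i true * q i false else 0) := by
      intro j
      rw [← Finset.mul_sum, cov_eq q hs i j]
    rw [Finset.sum_congr rfl (fun j _ => this j)]
    rw [Finset.sum_eq_single i]
    · simp [sq]
    · intro j _ hj; simp [(Ne.symm hj : ¬ i = j)]
    · simp
  rw [Finset.sum_congr rfl (fun i _ => this i)]

lemma chebyshev (hs : ∀ i, q i false + q i true = 1) (hq : ∀ i b, 0 ≤ q i b)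
    (t : ℝ) (ht : 0 < t) :
    ∑ s ∈ Finset.univ.filter
        (fun s : Fin N → Bool => t ≤ |∑ i, v i * (ind (s i) - q i true)|), Wt q s
      ≤ (∑ i, (v i)^2 * (q i true * q i false)) / t^2 := by
  classical
  have hW : ∀ s : Fin N → Bool, 0 ≤ Wt q s :=
    fun s => Finset.prod_nonneg fun i _ => hq i (s i)
  rw [← var_eq q v hs, le_div_iff₀ (by positivity)]
  have h1 : ∑ s ∈ Finset.univ.filter
        (fun s : Fin N → Bool => t ≤ |∑ i, v i * (ind (s i) - q i true)|), Wt q s * t^2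
      ≤ ∑ s ∈ Finset.univ.filter
        (fun s : Fin N → Bool => t ≤ |∑ i, v i * (ind (s i) - q i true)|),
          Wt q s * (∑ i, v i * (ind (s i) - q i true))^2 := by
    refine Finset.sum_le_sum fun s hsmem => ?_
    have := (Finset.mem_filter.1 hsmem).2
    have h2 : t^2 ≤ (∑ i, v i * (ind (s i) - q i true))^2 := by
      rw [← sq_abs (∑ i, v i * (ind (s i) - q i true))]
      exact pow_le_pow_left₀ ht.le this 2
    exact mul_le_mul_of_nonneg_left h2 (hW s)
  rw [← Finset.sum_mul] at h1
  refine h1.trans ?_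
  refine Finset.sum_le_sum_of_subset_of_nonneg (Finset.filter_subset _ _) ?_
  intro s _ _
  exact mul_nonneg (hW s) (sq_nonneg _)

end C2


def Mseq : ℕ → ℕ
  | 0 => 1
  | (k+1) => Mseq k * 2^(2^(2*k+9))

lemma Mseq_pos (k : ℕ) : 1 ≤ Mseq k := by
  induction k with
  | zero => simp [Mseq]
  | succ k ih =>
    rw [Mseq]
    calc 1 ≤ Mseq k := ih
    _ ≤ Mseq k * 2^(2^(2*k+9)) := Nat.le_mul_of_pos_right _ (Nat.pow_pos (by norm_num))

lemma Mseq_lt (k : ℕ) : Mseq k < Mseq (k+1) := by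
  rw [Mseq]
  have h2 : (1:ℕ) < 2^(2^(2*k+9)) := Nat.one_lt_two_pow (by positivity)
  calc Mseq k = Mseq k * 1 := (mul_one _).symm
  _ < Mseq k * 2^(2^(2*k+9)) := Nat.mul_lt_mul_of_pos_left h2 (Mseq_pos k)

lemma Mseq_gt (k : ℕ) : k + 1 ≤ Mseq k := by
  induction k with
  | zero => simp [Mseq]
  | succ k ih => have := Mseq_lt k; omega

def blk (k : ℕ) : Finset ℕ := Finset.Ico (Mseq k - 1) (Mseq (k+1) - 1)

noncomputable def wgt (n : ℕ) : ℝ := 1 / Real.sqrt (n+1)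

noncomputable def Rk (k : ℕ) : ℝ := ∑ n ∈ blk k, 1/((n:ℝ)+1)

noncomputable def theta (k : ℕ) : ℝ := (∑ n ∈ blk k, wgt n * (3/4)) - Rk k / 8

noncomputable def Tstat (k : ℕ) (y : ℕ → Bool) : ℝ := ∑ n ∈ blk k, wgt n * ind (y n)

def Ev (k : ℕ) (b : Bool) : Set (ℕ → Bool) :=
  if b then {y | Tstat k y < theta k} else {y | ¬ (Tstat k y < theta k)}

lemma Ev_compl (k : ℕ) (b : Bool) : (Ev k b)ᶜ = Ev k (!b) := by
  cases b <;> simp [Ev, Set.compl_setOf]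

lemma harmonic_lb : ∀ (M : ℕ), 1 ≤ M → ∀ (t : ℕ),
    (t:ℝ)/2 ≤ ∑ j ∈ Finset.Ico M (M * 2^t), 1/(j:ℝ) := by
  intro M hM t
  induction t with
  | zero => simp
  | succ t ih =>
    have h1 : M ≤ M * 2^t := Nat.le_mul_of_pos_right _ (by positivity)
    have h2 : M * 2^t ≤ M * 2^(t+1) := by
      apply Nat.mul_le_mul_left; exact Nat.pow_le_pow_right (by norm_num) (by omega)
    rw [← Finset.sum_Ico_consecutive _ h1 h2]
    have h3 : (1:ℝ)/2 ≤ ∑ j ∈ Finset.Ico (M * 2^t) (M * 2^(t+1)), 1/(j:ℝ) := by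
      have hcard : (Finset.Ico (M * 2^t) (M * 2^(t+1))).card = M * 2^t := by
        rw [Nat.card_Ico, pow_succ]
        have : 1 ≤ M * 2^t := le_trans hM h1
        ring_nf
        omega
      have hlb : ∀ j ∈ Finset.Ico (M * 2^t) (M * 2^(t+1)),
          (1:ℝ)/(M * 2^(t+1) : ℕ) ≤ 1/(j:ℝ) := by
        intro j hj
        rw [Finset.mem_Ico] at hj
        have hj0 : 0 < j := lt_of_lt_of_le (le_trans hM h1) hj.1
        apply one_div_le_one_div_of_le
        · exact_mod_cast hj0
        · exact_mod_cast hj.2.le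
      have := Finset.card_nsmul_le_sum _ _ _ hlb
      rw [hcard, nsmul_eq_mul] at this
      refine le_trans ?_ this
      have hpos : (0:ℝ) < (M * 2^(t+1) : ℕ) := by positivity
      rw [mul_one_div, le_div_iff₀ hpos]
      push_cast [pow_succ]
      ring_nf
      nlinarith [ih, hM]
    push_cast
    linarith

lemma Rk_eq (k : ℕ) : Rk k = ∑ j ∈ Finset.Ico (Mseq k) (Mseq (k+1)), 1/(j:ℝ) := by
  unfold Rk blk
  have h1 : Finset.Ico (Mseq k) (Mseq (k+1))
      = Finset.image (· + 1) (Finset.Ico (Mseq k - 1) (Mseq (k+1) - 1)) := by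
    rw [Finset.image_add_right_Ico]
    congr 1 <;> (have := Mseq_pos k; have := Mseq_pos (k+1); omega)
  rw [h1, Finset.sum_image (by intro a _ b _ h; simp only [] at h; omega)]
  push_cast
  rfl

lemma Rk_ge (k : ℕ) : (2:ℝ)^(2*k+8) ≤ Rk k := by
  rw [Rk_eq]
  have h := harmonic_lb (Mseq k) (Mseq_pos k) (2^(2*k+9))
  rw [show Mseq k * 2^(2^(2*k+9)) = Mseq (k+1) from rfl] at h
  refine le_trans ?_ h
  rw [le_div_iff₀ (by norm_num)]
  push_cast
  rw [← pow_succ]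

lemma Rk_pos (k : ℕ) : 0 < Rk k := lt_of_lt_of_le (by positivity) (Rk_ge k)

lemma blk_subset (k : ℕ) : blk k ⊆ Finset.range (Mseq (k+1) - 1) := by
  intro n hn; rw [Finset.mem_range]; exact (Finset.mem_Ico.1 hn).2

lemma fin_sum_blk {k N : ℕ} (hNk : N = Mseq (k+1) - 1) (f : ℕ → ℝ) :
    ∑ i : Fin N, (if i.val ∈ blk k then f i.val else 0) = ∑ n ∈ blk k, f n := by
  classical
  rw [Fin.sum_univ_eq_sum_range (fun n => if n ∈ blk k then f n else 0) N,
    Finset.sum_ite_mem]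
  congr 1
  rw [Finset.inter_eq_right]
  subst hNk; exact blk_subset k

lemma Ev_determined (k : ℕ) (b : Bool) (y z : ℕ → Bool)
    (h : ∀ i < Mseq (k+1) - 1, y i = z i) : y ∈ Ev k b ↔ z ∈ Ev k b := by
  have hT : Tstat k y = Tstat k z := Finset.sum_congr rfl fun n hn => by
    rw [h n (Finset.mem_range.1 (blk_subset k hn))]
  cases b <;> simp [Ev, hT]

lemma qk_true_false (x : ℕ → Bool) (n : ℕ) (hn : x n = false) :
    qk x n true = 3/4 := by simp [qk, alpha, hn]; norm_num

lemma qk_true_true (x : ℕ → Bool) (n : ℕ) (hn : x n = true) :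
    qk x n true = 3/4 - (1/4) * (1/Real.sqrt (n+1)) := by
  simp [qk, alpha, hn]; ring

lemma wgt_mul_self (n : ℕ) : wgt n * wgt n = 1/((n:ℝ)+1) := by
  unfold wgt
  rw [div_mul_div_comm, one_mul, Real.mul_self_sqrt (by positivity)]

set_option maxHeartbeats 2000000 in
lemma conc (Φ : (ℕ → Bool) → Measure (ℕ → Bool))
    (hΦ : ∀ x : ℕ → Bool, ∀ s : List Bool,
      Φ x (cyl s) = ENNReal.ofReal (bernWeight x s))
    (x : ℕ → Bool) (k : ℕ) (b : Bool) (hx : ∀ n ∈ blk k, x n = b) :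
    Φ x (Ev k (!b)) ≤ ENNReal.ofReal ((1/4:ℝ)^(k+2)) := by
  classical
  set N := Mseq (k+1) - 1 with hN
  rw [phi_eval Φ hΦ x N _ (Ev_determined k (!b))]
  apply ENNReal.ofReal_le_ofReal
  set q : Fin N → Bool → ℝ := fun i => qk x i.val with hq
  set v : Fin N → ℝ := fun i => if i.val ∈ blk k then wgt i.val else 0 with hv
  have hRpos : 0 < Rk k := Rk_pos k
  -- mean formula
  have hmean : ∑ i, v i * q i true
      = (if b then theta k - Rk k / 8 else theta k + Rk k / 8) := by
    have h1 : ∑ i, v i * q i true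
        = ∑ i : Fin N, (if i.val ∈ blk k then wgt i.val * qk x i.val true else 0) := by
      refine Finset.sum_congr rfl fun i _ => ?_
      simp only [hv, hq, ite_mul, zero_mul]
    rw [h1, fin_sum_blk hN (fun n => wgt n * qk x n true)]
    cases b with
    | false =>
      have : ∀ n ∈ blk k, wgt n * qk x n true = wgt n * (3/4) := fun n hn => by
        rw [qk_true_false x n (hx n hn)]
      rw [Finset.sum_congr rfl this]
      simp only [if_false, Bool.false_eq_true]
      unfold theta; ring
    | true =>
      have : ∀ n ∈ blk k, wgt n * qk x n true
          = wgt n * (3/4) - (1/4) * (1/((n:ℝ)+1)) := fun n hn => by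
        rw [qk_true_true x n (hx n hn), mul_sub, ← wgt_mul_self n]
        unfold wgt; ring
      rw [Finset.sum_congr rfl this, Finset.sum_sub_distrib, ← Finset.mul_sum]
      simp only [if_true]
      unfold theta Rk; ring
  -- the statistic formula
  have hstat : ∀ s : Fin N → Bool, ∑ i, v i * ind (s i) = Tstat k (extN N s) := by
    intro s
    have h1 : ∑ i, v i * ind (s i)
        = ∑ i : Fin N, (if i.val ∈ blk k then wgt i.val * ind (extN N s i.val) else 0) := by
      refine Finset.sum_congr rfl fun i _ => ?_
      have : extN N s i.val = s i := by simp [extN, i.isLt]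
      simp only [hv, ite_mul, zero_mul, this]
    rw [h1, fin_sum_blk hN (fun n => wgt n * ind (extN N s n))]
    rfl
  -- deviation
  have hdev : ∀ s ∈ gdStr N (Ev k (!b)),
      Rk k / 8 ≤ |∑ i, v i * (ind (s i) - q i true)| := by
    intro s hs
    have hmem := mem_gdStr.1 hs
    have hsplit : ∑ i, v i * (ind (s i) - q i true)
        = Tstat k (extN N s) - ∑ i, v i * q i true := by
      rw [← hstat s, ← Finset.sum_sub_distrib]
      exact Finset.sum_congr rfl fun i _ => by ring
    rw [hsplit, hmean]
    cases b with
    | false =>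
      simp only [Bool.not_false, Ev, if_true, Set.mem_setOf_eq] at hmem
      simp only [Bool.false_eq_true, if_false]
      rw [abs_sub_comm]
      refine le_abs.2 (Or.inl ?_)
      linarith
    | true =>
      simp only [Bool.not_true, Ev, Bool.false_eq_true, if_false, Set.mem_setOf_eq] at hmem
      simp only [if_true]
      refine le_abs.2 (Or.inl ?_)
      linarith
  -- apply chebyshev
  have hcheb := chebyshev q v (fun i => qk_sum x i.val) (fun i bb => qk_nonneg x i.val bb)
    (Rk k / 8) (by positivity)
  have hsub : gdStr N (Ev k (!b)) ⊆ Finset.univ.filter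
      (fun s : Fin N → Bool => Rk k / 8 ≤ |∑ i, v i * (ind (s i) - q i true)|) := by
    intro s hs
    exact Finset.mem_filter.2 ⟨Finset.mem_univ s, hdev s hs⟩
  have hWtEq : ∀ s : Fin N → Bool, Wt' x N s = Wt q s := fun s => rfl
  have step1 : ∑ s ∈ gdStr N (Ev k (!b)), Wt' x N s
      ≤ ∑ s ∈ Finset.univ.filter
        (fun s : Fin N → Bool => Rk k / 8 ≤ |∑ i, v i * (ind (s i) - q i true)|), Wt q s := by
    rw [Finset.sum_congr rfl (fun s _ => hWtEq s)]
    exact Finset.sum_le_sum_of_subset_of_nonneg hsub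
      (fun s _ _ => Finset.prod_nonneg fun i _ => qk_nonneg x i.val (s i))
  refine step1.trans (hcheb.trans ?_)
  -- variance bound
  have hvar : ∑ i, (v i)^2 * (q i true * q i false) ≤ Rk k / 4 := by
    have h1 : ∑ i, (v i)^2 * (q i true * q i false)
        ≤ ∑ i : Fin N, (if i.val ∈ blk k then (1/((i.val:ℝ)+1)) * (1/4) else 0) := by
      refine Finset.sum_le_sum fun i _ => ?_
      simp only [hv, hq]
      by_cases hmem : i.val ∈ blk k
      · simp only [if_pos hmem]
        have hqt := qk_nonneg x i.val true
        have hqf := qk_nonneg x i.val false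
        have hsum := qk_sum x i.val
        have h2 : qk x i.val true * qk x i.val false ≤ 1/4 := by nlinarith [sq_nonneg (qk x i.val true - qk x i.val false)]
        rw [sq, wgt_mul_self]
        have h4 : (0:ℝ) ≤ 1/((i.val:ℝ)+1) := by positivity
        exact mul_le_mul_of_nonneg_left h2 h4
      · simp [hmem]
    refine h1.trans ?_
    rw [fin_sum_blk hN (fun n => (1/((n:ℝ)+1)) * (1/4))]
    unfold Rk
    rw [Finset.sum_div]
    exact le_of_eq (Finset.sum_congr rfl fun n _ => by ring)
  -- numeric
  have hRk8 : (0:ℝ) < (Rk k / 8)^2 := by positivity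
  have hnum : (Rk k / 4) / (Rk k / 8)^2 ≤ (1/4:ℝ)^(k+2) := by
    rw [div_le_iff₀ hRk8]
    have hfour : (4:ℝ)^(k+2) * 16 = 2^(2*k+8) := by
      rw [show (4:ℝ) = 2^2 by norm_num, ← pow_mul, show (16:ℝ) = 2^4 by norm_num,
        ← pow_add]
      norm_num
      try ring
    have h2 : (1/4:ℝ)^(k+2) = 1/(4:ℝ)^(k+2) := by rw [div_pow, one_pow]
    rw [h2]
    have h4pos : (0:ℝ) < (4:ℝ)^(k+2) := by positivity
    rw [div_mul_eq_mul_div, le_div_iff₀ h4pos]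
    have hRge : (2:ℝ)^(2*k+8) ≤ Rk k := Rk_ge k
    nlinarith [hRpos, hRge]
  refine le_trans ?_ hnum
  gcongr

section Adaptive
variable (μ : Measure (ℕ → Bool))

lemma measurable_Ev (k : ℕ) (b : Bool) : MeasurableSet (Ev k b) :=
  measurable_of_determined (fun y z h => Ev_determined k b y z h)

noncomputable def PS (x : ℕ → Bool) : ℕ → ℕ → Set (ℕ → Bool)
  | 0 => fun _ => Set.univ
  | (k+1) =>
    let P := PS x k
    let c : Bool := if μ (P (Nat.unpair k).1 ∩ Ev k true) ≤ μ (P (Nat.unpair k).1 ∩ Ev k false)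
      then true else false
    fun r => if r = (Nat.unpair k).1 ∧ (∀ n ∈ blk k, x n = c) then P r ∩ Ev k c else P r

noncomputable def chc (x : ℕ → Bool) (k : ℕ) : Bool :=
  if μ (PS μ x k (Nat.unpair k).1 ∩ Ev k true) ≤ μ (PS μ x k (Nat.unpair k).1 ∩ Ev k false)
  then true else false

def glk (x : ℕ → Bool) (k : ℕ) : Prop := ∀ n ∈ blk k, x n = chc μ x k

noncomputable instance (x : ℕ → Bool) (k : ℕ) : Decidable (glk μ x k) := by
  unfold glk; infer_instance

lemma PS_succ (x : ℕ → Bool) (k r : ℕ) : PS μ x (k+1) r =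
    if r = (Nat.unpair k).1 ∧ glk μ x k then PS μ x k r ∩ Ev k (chc μ x k)
    else PS μ x k r := by
  show (let P := PS μ x k
    let c : Bool := if μ (P (Nat.unpair k).1 ∩ Ev k true) ≤ μ (P (Nat.unpair k).1 ∩ Ev k false)
      then true else false
    fun r => if r = (Nat.unpair k).1 ∧ (∀ n ∈ blk k, x n = c) then P r ∩ Ev k c else P r) r = _
  simp only [glk, chc]
  exact if_congr Iff.rfl rfl rfl

lemma PS_measurable (x : ℕ → Bool) (k r : ℕ) : MeasurableSet (PS μ x k r) := by
  induction k with
  | zero => exact MeasurableSet.univ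
  | succ k ih =>
    rw [PS_succ]
    split_ifs
    · exact ih.inter (measurable_Ev k _)
    · exact ih

lemma PS_halve (x : ℕ → Bool) (k : ℕ) :
    2 * μ (PS μ x k (Nat.unpair k).1 ∩ Ev k (chc μ x k))
      ≤ μ (PS μ x k (Nat.unpair k).1) := by
  set P := PS μ x k (Nat.unpair k).1
  have hpart : μ (P ∩ Ev k true) + μ (P ∩ Ev k false) = μ P := by
    have h1 : P ∩ Ev k false = P \ Ev k true := by
      rw [Set.diff_eq, show (Ev k true)ᶜ = Ev k false from Ev_compl k true]
    rw [h1, measure_inter_add_diff P (measurable_Ev k true)]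
  unfold chc
  split_ifs with h
  · calc 2 * μ (P ∩ Ev k true) = μ (P ∩ Ev k true) + μ (P ∩ Ev k true) := two_mul _
    _ ≤ μ (P ∩ Ev k true) + μ (P ∩ Ev k false) := add_le_add le_rfl h
    _ = μ P := hpart
  · push_neg at h
    calc 2 * μ (P ∩ Ev k false) = μ (P ∩ Ev k false) + μ (P ∩ Ev k false) := two_mul _
    _ ≤ μ (P ∩ Ev k true) + μ (P ∩ Ev k false) := add_le_add h.le le_rfl
    _ = μ P := hpart

noncomputable def cnt (x : ℕ → Bool) (k r : ℕ) : ℕ :=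
  ((Finset.range k).filter (fun j => (Nat.unpair j).1 = r ∧ glk μ x j)).card

lemma cnt_succ_yes (x : ℕ → Bool) (k r : ℕ) (h : (Nat.unpair k).1 = r ∧ glk μ x k) :
    cnt μ x (k+1) r = cnt μ x k r + 1 := by
  unfold cnt
  rw [Finset.range_add_one, Finset.filter_insert, if_pos h,
    Finset.card_insert_of_notMem (by simp)]

lemma cnt_succ_no (x : ℕ → Bool) (k r : ℕ) (h : ¬ ((Nat.unpair k).1 = r ∧ glk μ x k)) :
    cnt μ x (k+1) r = cnt μ x k r := by
  unfold cnt
  rw [Finset.range_add_one, Finset.filter_insert, if_neg h]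

lemma PS_bound [IsProbabilityMeasure μ] (x : ℕ → Bool) (k r : ℕ) :
    μ (PS μ x k r) ≤ (2⁻¹ : ENNReal) ^ (cnt μ x k r) := by
  induction k with
  | zero =>
    simp [PS, cnt, measure_univ]
  | succ k ih =>
    rw [PS_succ]
    by_cases h : r = (Nat.unpair k).1 ∧ glk μ x k
    · rw [if_pos h, cnt_succ_yes μ x k r ⟨h.1.symm, h.2⟩, pow_succ]
      have hh := PS_halve μ x k
      rw [← h.1] at hh
      have h2 : μ (PS μ x k r ∩ Ev k (chc μ x k)) ≤ 2⁻¹ * μ (PS μ x k r) := by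
        have h3 := mul_le_mul_right hh (2⁻¹ : ENNReal)
        rwa [← mul_assoc, ENNReal.inv_mul_cancel two_ne_zero ENNReal.ofNat_ne_top,
          one_mul] at h3
      calc μ (PS μ x k r ∩ Ev k (chc μ x k)) ≤ 2⁻¹ * μ (PS μ x k r) := h2
      _ ≤ 2⁻¹ * 2⁻¹ ^ (cnt μ x k r) := by
          exact mul_le_mul_right ih _
      _ = 2⁻¹ ^ (cnt μ x k r) * 2⁻¹ := by ring
    · rw [if_neg h, cnt_succ_no μ x k r (fun hc => h ⟨hc.1.symm, hc.2⟩)]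
      exact ih

lemma PS_compl_bound (Φ : (ℕ → Bool) → Measure (ℕ → Bool))
    (hΦ : ∀ x : ℕ → Bool, ∀ s : List Bool,
      Φ x (cyl s) = ENNReal.ofReal (bernWeight x s))
    (x : ℕ → Bool) (k r : ℕ) :
    Φ x ((PS μ x k r)ᶜ)
      ≤ ∑ j ∈ ((Finset.range k).filter (fun j => (Nat.unpair j).1 = r ∧ glk μ x j)),
          ENNReal.ofReal ((1/4:ℝ)^(j+2)) := by
  induction k with
  | zero => simp [PS]
  | succ k ih =>
    rw [PS_succ]
    by_cases h : r = (Nat.unpair k).1 ∧ glk μ x k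
    · rw [if_pos h, Finset.range_add_one, Finset.filter_insert, if_pos ⟨h.1.symm, h.2⟩,
        Finset.sum_insert (by simp)]
      rw [Set.compl_inter]
      refine (measure_union_le _ _).trans ?_
      rw [add_comm]
      refine add_le_add ?_ ih
      rw [Ev_compl k (chc μ x k)]
      exact conc Φ hΦ x k (chc μ x k) h.2
    · rw [if_neg h, Finset.range_add_one, Finset.filter_insert,
        if_neg (fun hc => h ⟨hc.1.symm, hc.2⟩)]
      exact ih

lemma PS_depend (x y : ℕ → Bool) (k : ℕ) (h : ∀ n < Mseq k - 1, x n = y n) :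
    PS μ x k = PS μ y k := by
  induction k with
  | zero => rfl
  | succ k ih =>
    have hmono : Mseq k - 1 ≤ Mseq (k+1) - 1 := by
      have := Mseq_lt k; omega
    have hk : ∀ n < Mseq k - 1, x n = y n := fun n hn => h n (lt_of_lt_of_le hn hmono)
    have hPS := ih hk
    funext r
    rw [PS_succ, PS_succ]
    have hchc : chc μ x k = chc μ y k := by unfold chc; rw [hPS]
    have hglk : glk μ x k ↔ glk μ y k := by
      unfold glk
      rw [hchc]
      constructor <;> intro hg n hn <;>
        have hlt : n < Mseq (k+1) - 1 := Finset.mem_range.1 (blk_subset k hn)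
      · rw [← h n hlt]; exact hg n hn
      · rw [h n hlt]; exact hg n hn
    rw [hPS, hchc]
    by_cases hcase : r = (Nat.unpair k).1 ∧ glk μ y k
    · rw [if_pos hcase, if_pos ⟨hcase.1, hglk.2 hcase.2⟩]
    · rw [if_neg hcase, if_neg (fun hc => hcase ⟨hc.1, hglk.1 hc.2⟩)]

lemma chc_depend (x y : ℕ → Bool) (k : ℕ) (h : ∀ n < Mseq k - 1, x n = y n) :
    chc μ x k = chc μ y k := by
  unfold chc; rw [PS_depend μ x y k h]

lemma glk_depend (x y : ℕ → Bool) (k : ℕ) (h : ∀ n < Mseq (k+1) - 1, x n = y n) :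
    glk μ x k ↔ glk μ y k := by
  have hmono : Mseq k - 1 ≤ Mseq (k+1) - 1 := by have := Mseq_lt k; omega
  have h' : ∀ n < Mseq k - 1, x n = y n := fun n hn => h n (lt_of_lt_of_le hn hmono)
  unfold glk
  rw [chc_depend μ x y k h']
  constructor <;> intro hg n hn <;>
    have hlt : n < Mseq (k+1) - 1 := Finset.mem_range.1 (blk_subset k hn)
  · rw [← h n hlt]; exact hg n hn
  · rw [h n hlt]; exact hg n hn

end Adaptive

section Topo
variable (μ : Measure (ℕ → Bool))

lemma open_of_determined {L : ℕ} {S : Set (ℕ → Bool)}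
    (hS : ∀ y z : ℕ → Bool, (∀ i < L, y i = z i) → (y ∈ S ↔ z ∈ S)) : IsOpen S := by
  have hrep : S = ⋃ x ∈ S, {y : ℕ → Bool | ∀ i < L, y i = x i} := by
    ext y
    constructor
    · intro hy
      exact Set.mem_biUnion hy (fun i _ => rfl)
    · intro hy
      obtain ⟨x, hx, hyx⟩ := Set.mem_iUnion₂.1 hy
      exact (hS y x hyx).2 hx
  rw [hrep]
  refine isOpen_biUnion fun x _ => ?_
  have : {y : ℕ → Bool | ∀ i < L, y i = x i}
      = ⋂ i ∈ Finset.range L, (fun y : ℕ → Bool => y i) ⁻¹' {x i} := by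
    ext y; simp
  rw [this]
  exact isOpen_biInter_finset fun i _ =>
    (continuous_apply i).isOpen_preimage _ (isOpen_discrete _)

def Uset (r m : ℕ) : Set (ℕ → Bool) := ⋃ i : ℕ, {x | glk μ x (Nat.pair r (m + i))}

lemma Uset_open (r m : ℕ) : IsOpen (Uset μ r m) := by
  refine isOpen_iUnion fun i => ?_
  exact open_of_determined (fun y z h =>
    glk_depend μ y z (Nat.pair r (m + i)) h)

lemma Uset_dense (r m : ℕ) : Dense (Uset μ r m) := by
  rw [dense_iff_inter_open]
  rintro V hV ⟨z, hz⟩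
  obtain ⟨I, u, hIu, hsub⟩ := isOpen_pi_iff.1 hV z hz
  set L : ℕ := (I.sup id) + 1 with hL
  set K : ℕ := Nat.pair r (m + L) with hK
  have hLK : L ≤ Mseq K - 1 := by
    have h1 := Mseq_gt K
    have h2 : m + L ≤ K := Nat.right_le_pair r (m + L)
    omega
  set z' : ℕ → Bool := fun n => if n < Mseq K - 1 then z n else false with hz'
  set b : Bool := chc μ z' K with hb
  set y : ℕ → Bool := fun n => if n < Mseq K - 1 then z n else b with hy
  have hagree : ∀ n < Mseq K - 1, y n = z' n := fun n hn => by
    simp only [hy, hz', if_pos hn]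
  have hchc : chc μ y K = b := by
    rw [chc_depend μ y z' K hagree]
  have hglk : glk μ y K := by
    intro n hn
    have hge : Mseq K - 1 ≤ n := (Finset.mem_Ico.1 hn).1
    simp only [hy, hchc, if_neg (by omega : ¬ n < Mseq K - 1)]
    exact hchc.symm
  refine ⟨y, ?_, ?_⟩
  · apply hsub
    intro i hi
    have hiL : i < L := by
      have : i ≤ I.sup id := Finset.le_sup (f := id) hi
      omega
    have : y i = z i := by simp only [hy, if_pos (lt_of_lt_of_le hiL hLK)]
    rw [this]
    exact (hIu i hi).2
  · exact Set.mem_iUnion.2 ⟨L, hglk⟩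

end Topo

lemma quarter_sum_bound (r k : ℕ) (μ : Measure (ℕ → Bool)) (x : ℕ → Bool) :
    ∑ j ∈ ((Finset.range k).filter (fun j => (Nat.unpair j).1 = r ∧ glk μ x j)),
        ENNReal.ofReal ((1/4:ℝ)^(j+2)) ≤ (2⁻¹ : ENNReal)^r := by
  classical
  set F := ((Finset.range k).filter (fun j => (Nat.unpair j).1 = r ∧ glk μ x j)) with hF
  have hreal : ∑ j ∈ F, (1/4:ℝ)^(j+2) ≤ (1/2:ℝ)^r := by
    have h1 : ∀ j ∈ F, (1/4:ℝ)^(j+2) ≤ (1/2)^(r+4) * (1/2)^((Nat.unpair j).2) := by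
      intro j hj
      obtain ⟨hjr, _⟩ := (Finset.mem_filter.1 hj).2
      have hq : (1/4:ℝ)^(j+2) = (1/2)^(2*j+4) := by
        rw [show (1/4:ℝ) = (1/2)^2 by norm_num, ← pow_mul]
        ring_nf
      rw [hq, ← pow_add]
      apply pow_le_pow_of_le_one (by norm_num) (by norm_num)
      have hjl : r ≤ j := hjr ▸ Nat.unpair_left_le j
      have hjrt : (Nat.unpair j).2 ≤ j := Nat.unpair_right_le j
      omega
    refine (Finset.sum_le_sum h1).trans ?_
    rw [← Finset.mul_sum]
    have hinj : Set.InjOn (fun j => (Nat.unpair j).2) F := by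
      intro a ha b hb hab
      have ha' := (Finset.mem_filter.1 ha).2.1
      have hb' := (Finset.mem_filter.1 hb).2.1
      have h1 : Nat.pair r (Nat.unpair a).2 = a := by
        rw [← ha']; exact Nat.pair_unpair a
      have h2 : Nat.pair r (Nat.unpair b).2 = b := by
        rw [← hb']; exact Nat.pair_unpair b
      rw [← h1, ← h2]
      simp only at hab
      rw [hab]
    have himg : ∑ j ∈ F, (1/2:ℝ)^((Nat.unpair j).2)
        = ∑ i ∈ F.image (fun j => (Nat.unpair j).2), (1/2:ℝ)^i := by
      rw [Finset.sum_image (fun a ha b hb hab => hinj ha hb hab)]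
    rw [himg]
    have hsub2 : F.image (fun j => (Nat.unpair j).2)
        ⊆ Finset.range ((F.image (fun j => (Nat.unpair j).2)).sup id + 1) := by
      intro i hi
      rw [Finset.mem_range]
      have : i ≤ (F.image (fun j => (Nat.unpair j).2)).sup id := Finset.le_sup (f := id) hi
      omega
    have h2 : ∑ i ∈ F.image (fun j => (Nat.unpair j).2), (1/2:ℝ)^i ≤ 2 := by
      refine le_trans (Finset.sum_le_sum_of_subset_of_nonneg hsub2
        (fun i _ _ => by positivity)) ?_
      exact sum_geometric_two_le _
    calc (1/2:ℝ)^(r+4) * ∑ i ∈ F.image (fun j => (Nat.unpair j).2), (1/2:ℝ)^i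
        ≤ (1/2:ℝ)^(r+4) * 2 := by
          exact mul_le_mul_of_nonneg_left h2 (by positivity)
    _ ≤ (1/2:ℝ)^r := by
        rw [pow_add]
        nlinarith [pow_pos (by norm_num : (0:ℝ) < 1/2) r]
  calc ∑ j ∈ F, ENNReal.ofReal ((1/4:ℝ)^(j+2))
      = ENNReal.ofReal (∑ j ∈ F, (1/4:ℝ)^(j+2)) :=
        (ENNReal.ofReal_sum_of_nonneg (fun j _ => by positivity)).symm
  _ ≤ ENNReal.ofReal ((1/2:ℝ)^r) := ENNReal.ofReal_le_ofReal hreal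
  _ = (2⁻¹ : ENNReal)^r := by
      rw [ENNReal.ofReal_pow (by norm_num),
        show ENNReal.ofReal (1/2:ℝ) = 2⁻¹ by norm_num [ENNReal.ofReal_div_of_pos]]

theorem stmt10' (μ : Measure (ℕ → Bool)) [IsProbabilityMeasure μ]
    (Φ : (ℕ → Bool) → Measure (ℕ → Bool))
    (hprob : ∀ x, IsProbabilityMeasure (Φ x))
    (hΦ : ∀ x : ℕ → Bool, ∀ s : List Bool,
      Φ x (cyl s) = ENNReal.ofReal (bernWeight x s)) :
    {x : ℕ → Bool | Φ x ⟂ₘ μ} ∈ residual (ℕ → Bool) := by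
  classical
  set G : Set (ℕ → Bool) := ⋂ p : ℕ × ℕ, Uset μ p.1 p.2 with hG
  have hGres : G ∈ residual (ℕ → Bool) := by
    rw [mem_residual]
    refine ⟨G, subset_rfl, ?_, ?_⟩
    · exact IsGδ.iInter (fun p => (Uset_open μ p.1 p.2).isGδ)
    · exact dense_iInter_of_isOpen (fun p => Uset_open μ p.1 p.2)
        (fun p => Uset_dense μ p.1 p.2)
  refine Filter.mem_of_superset hGres ?_
  intro x hx
  simp only [hG, Set.mem_iInter] at hx
  -- for each r there are infinitely many good class-r blocks
  have hinf : ∀ r : ℕ, {i : ℕ | glk μ x (Nat.pair r i)}.Infinite := by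
    intro r
    apply Set.infinite_of_forall_exists_gt
    intro a
    obtain ⟨i, hi⟩ := Set.mem_iUnion.1 (hx (r, a+1))
    exact ⟨a + 1 + i, hi, by omega⟩
  have hW : ∀ r : ℕ, ∃ k, μ (PS μ x k r) ≤ 2⁻¹^r ∧ Φ x ((PS μ x k r)ᶜ) ≤ 2⁻¹^r := by
    intro r
    obtain ⟨t, hts, htc⟩ := (hinf r).exists_subset_card_eq r
    set k := (t.image (Nat.pair r)).sup id + 1 with hk
    have hsubF : t.image (Nat.pair r)
        ⊆ (Finset.range k).filter (fun j => (Nat.unpair j).1 = r ∧ glk μ x j) := by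
      intro j hj
      obtain ⟨i, hit, hij⟩ := Finset.mem_image.1 hj
      refine Finset.mem_filter.2 ⟨?_, ?_, ?_⟩
      · rw [Finset.mem_range]
        have : j ≤ (t.image (Nat.pair r)).sup id := Finset.le_sup (f := id) hj
        omega
      · rw [← hij, Nat.unpair_pair]
      · rw [← hij]; exact hts hit
    have hcnt : r ≤ cnt μ x k r := by
      have h1 : (t.image (Nat.pair r)).card = r := by
        rw [Finset.card_image_of_injective t (fun a b hab => by
          have := congrArg (fun n => (Nat.unpair n).2) hab
          simpa [Nat.unpair_pair] using this), htc]
      calc r = (t.image (Nat.pair r)).card := h1.symm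
      _ ≤ cnt μ x k r := Finset.card_le_card hsubF
    refine ⟨k, ?_, ?_⟩
    · refine (PS_bound μ x k r).trans ?_
      exact pow_le_pow_of_le_one zero_le (by norm_num) hcnt
    · exact (PS_compl_bound μ Φ hΦ x k r).trans (quarter_sum_bound r k μ x)
  choose kf hk1 hk2 using hW
  set W : ℕ → Set (ℕ → Bool) := fun r => PS μ x (kf r) r with hWdef
  set S : Set (ℕ → Bool) := ⋂ n : ℕ, ⋃ i : ℕ, W (n + i) with hS
  have hWmeas : ∀ r, MeasurableSet (W r) := fun r => PS_measurable μ x (kf r) r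
  have hSmeas : MeasurableSet S :=
    MeasurableSet.iInter fun n => MeasurableSet.iUnion fun i => hWmeas (n + i)
  have htend : Filter.Tendsto (fun n : ℕ => (2⁻¹ : ENNReal)^n) Filter.atTop (nhds 0) :=
    ENNReal.tendsto_pow_atTop_nhds_zero_of_lt_one (by norm_num)
  -- μ S = 0
  have hμS : μ S = 0 := by
    have hb : ∀ n : ℕ, μ S ≤ 2⁻¹^n * 2 := by
      intro n
      calc μ S ≤ μ (⋃ i : ℕ, W (n + i)) := measure_mono (Set.iInter_subset _ n)
      _ ≤ ∑' i : ℕ, μ (W (n + i)) := measure_iUnion_le _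
      _ ≤ ∑' i : ℕ, (2⁻¹ : ENNReal)^(n + i) := ENNReal.tsum_le_tsum (fun i => hk1 (n + i))
      _ = 2⁻¹^n * ∑' i : ℕ, (2⁻¹ : ENNReal)^i := by
          rw [← ENNReal.tsum_mul_left]
          congr 1; funext i; rw [pow_add]
      _ = 2⁻¹^n * 2 := by rw [ENNReal.tsum_geometric]; norm_num
    have h0 : Filter.Tendsto (fun n : ℕ => (2⁻¹ : ENNReal)^n * 2) Filter.atTop (nhds 0) := by
      have := ENNReal.Tendsto.mul_const htend (Or.inr (ENNReal.ofNat_ne_top (n := 2)))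
      simpa using this
    have := ge_of_tendsto h0 (Filter.Eventually.of_forall hb)
    exact le_antisymm this zero_le
  -- Φ x Sᶜ = 0
  have hΦS : Φ x Sᶜ = 0 := by
    have hScompl : Sᶜ = ⋃ n : ℕ, ⋂ i : ℕ, (W (n + i))ᶜ := by
      rw [hS]
      simp only [Set.compl_iInter, Set.compl_iUnion]
    have hper : ∀ n : ℕ, Φ x (⋂ i : ℕ, (W (n + i))ᶜ) = 0 := by
      intro n
      have hb : ∀ i : ℕ, Φ x (⋂ j : ℕ, (W (n + j))ᶜ) ≤ 2⁻¹^(n + i) := fun i =>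
        (measure_mono (Set.iInter_subset _ i)).trans (hk2 (n + i))
      have h0 : Filter.Tendsto (fun i : ℕ => (2⁻¹ : ENNReal)^(n + i)) Filter.atTop (nhds 0) := by
        have : (fun i : ℕ => (2⁻¹ : ENNReal)^(n + i)) = fun i => 2⁻¹^n * 2⁻¹^i := by
          funext i; rw [pow_add]
        rw [this]
        have := ENNReal.Tendsto.const_mul (a := (2⁻¹ : ENNReal)^n) htend
          (Or.inr (by simp [ENNReal.pow_ne_top]))
        simpa using this
      have := ge_of_tendsto h0 (Filter.Eventually.of_forall hb)
      exact le_antisymm this zero_le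
    rw [hScompl]
    refine le_antisymm ?_ zero_le
    calc Φ x (⋃ n : ℕ, ⋂ i : ℕ, (W (n + i))ᶜ) ≤ ∑' n : ℕ, Φ x (⋂ i : ℕ, (W (n + i))ᶜ) :=
          measure_iUnion_le _
    _ = 0 := by simp [hper]
  exact ⟨Sᶜ, hSmeas.compl, hΦS, by rwa [compl_compl]⟩


/-- For every probability measure `μ`, the set `{x : μ^x ⊥ μ}` is comeagre. -/
theorem stmt10 (μ : Measure (ℕ → Bool)) [IsProbabilityMeasure μ]
    (Φ : (ℕ → Bool) → Measure (ℕ → Bool))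
    (hprob : ∀ x, IsProbabilityMeasure (Φ x))
    (hΦ : ∀ x : ℕ → Bool, ∀ s : List Bool,
      Φ x (cyl s) = ENNReal.ofReal (bernWeight x s)) :
    {x : ℕ → Bool | Φ x ⟂ₘ μ} ∈ residual (ℕ → Bool) := by
  exact stmt10' μ Φ hprob hΦ
end

section
/- If A is a set of pairwise mutually singular non-atomic Borel probability measures on Cantor space with |A| < 𝔠, then A is not maximal among orthogonal families of non-atomic measures: there exists a non-atomic product measure ν with ν ⊥ μ for every μ ∈ A. -/
open MeasureTheory

open Filter Set

noncomputable section Stmt18Aux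

namespace Stmt18Aux

/-- Doubling-type map for the Bernoulli(p) digit expansion. -/
def T (p : ℝ) (x : ℝ) : ℝ := if x < p then x / p else (x - p) / (1 - p)

/-- The digits map `[0,1) → Cantor space`. -/
def dig (p : ℝ) (x : ℝ) : ℕ → Bool := fun k => decide (p ≤ (T p)^[k] x)

/-- The Bernoulli(p) product measure, realized as pushforward of Lebesgue measure. -/
def ber (p : ℝ) : Measure (ℕ → Bool) := Measure.map (dig p) (volume.restrict (Set.Ico 0 1))

lemma measurable_T (p : ℝ) : Measurable (T p) := by
  unfold T
  exact Measurable.ite (measurableSet_lt measurable_id measurable_const)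
    (measurable_id.div_const p) ((measurable_id.sub measurable_const).div_const (1 - p))

lemma measurable_dig (p : ℝ) : Measurable (dig p) := by
  refine measurable_pi_lambda _ fun k => ?_
  have h : (fun x => dig p x k) = fun x => if p ≤ (T p)^[k] x then true else false := by
    funext x; simp [dig]
  rw [h]
  exact Measurable.ite (measurableSet_le measurable_const ((measurable_T p).iterate k))
    measurable_const measurable_const

lemma measurableSet_cyl (s : List Bool) : MeasurableSet (cyl s) := by
  have h : cyl s = ⋂ (i : ℕ) (_ : i < s.length),
      (fun x : ℕ → Bool => x i) ⁻¹' {s.getD i false} := by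
    ext x; simp [cyl]
  rw [h]
  exact MeasurableSet.iInter fun i => MeasurableSet.iInter fun _ =>
    (measurable_pi_apply i) (measurableSet_singleton _)

lemma volume_preimage_affine {c : ℝ} (hc : 0 < c) (d : ℝ) (E : Set ℝ) :
    volume ((fun x => (x - d) / c) ⁻¹' E) = ENNReal.ofReal c * volume E := by
  have h1 : (fun x : ℝ => (x - d) / c) = (fun x : ℝ => x * c⁻¹) ∘ (fun x : ℝ => -d + x) := by
    funext x; simp [div_eq_mul_inv, sub_eq_neg_add]
  rw [h1, Set.preimage_comp, measure_preimage_add,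
    Real.volume_preimage_mul_right (inv_ne_zero hc.ne'), inv_inv, abs_of_pos hc]

end Stmt18Aux

namespace Stmt18Aux

lemma dig_preimage_cons (p : ℝ) (b : Bool) (t : List Bool) :
    dig p ⁻¹' cyl (b :: t) = {x | decide (p ≤ x) = b} ∩ (T p) ⁻¹' (dig p ⁻¹' cyl t) := by
  ext x
  simp only [Set.mem_preimage, Set.mem_inter_iff, Set.mem_setOf_eq, cyl]
  constructor
  · intro h
    refine ⟨?_, fun i hi => ?_⟩
    · have := h 0 (Nat.succ_pos _); simp [dig] at this; exact this
    · have := h (i + 1) (by simpa using Nat.succ_lt_succ hi)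
      simp [dig, Function.iterate_succ_apply] at this ⊢; exact this
  · rintro ⟨h0, h1⟩ i hi
    cases i with
    | zero => simp [dig]; exact h0
    | succ j =>
      have := h1 j (by simpa using Nat.lt_of_succ_lt_succ hi)
      simp [dig, Function.iterate_succ_apply] at this ⊢; exact this

lemma volume_dig_cyl {p : ℝ} (hp : p ∈ Set.Ioo (0:ℝ) 1) (s : List Bool) :
    volume (dig p ⁻¹' cyl s ∩ Set.Ico 0 1) =
      ENNReal.ofReal (∏ k ∈ Finset.range s.length, (if s.getD k false then 1 - p else p)) := by
  induction s with
  | nil =>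
    have : dig p ⁻¹' cyl [] = Set.univ := by
      ext x; simp [cyl]
    simp [this, Real.volume_Ico]
  | cons b t ih =>
    have h0 : (0:ℝ) < p := hp.1
    have h1 : (0:ℝ) < 1 - p := by linarith [hp.2]
    have key : volume ((dig p ⁻¹' cyl (b :: t)) ∩ Set.Ico 0 1)
        = ENNReal.ofReal (if b then 1 - p else p) *
          ENNReal.ofReal (∏ k ∈ Finset.range t.length, (if t.getD k false then 1 - p else p)) := by
      rw [dig_preimage_cons]
      cases b
      · have hset : ({x : ℝ | decide (p ≤ x) = false} ∩ T p ⁻¹' (dig p ⁻¹' cyl t))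
            ∩ Set.Ico 0 1
            = (fun x => (x - 0) / p) ⁻¹' ((dig p ⁻¹' cyl t) ∩ Set.Ico 0 1) := by
          ext x
          simp only [Set.mem_inter_iff, Set.mem_setOf_eq, Set.mem_preimage, Set.mem_Ico,
            decide_eq_false_iff_not, not_le, sub_zero]
          constructor
          · rintro ⟨⟨hxp, hTx⟩, hx0, _⟩
            have hT : T p x = x / p := if_pos hxp
            exact ⟨by rwa [hT] at hTx, div_nonneg hx0 h0.le, (div_lt_one h0).2 hxp⟩
          · rintro ⟨hD, hd0, hd1⟩
            have hx0 : 0 ≤ x := by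
              by_contra hx
              push_neg at hx
              have : x / p < 0 := div_neg_of_neg_of_pos hx h0
              linarith
            have hxp : x < p := (div_lt_one h0).1 hd1
            have hT : T p x = x / p := if_pos hxp
            exact ⟨⟨hxp, by rwa [hT]⟩, hx0, by linarith [hp.2]⟩
        rw [hset, volume_preimage_affine h0, ih]
        simp
      · have hset : ({x : ℝ | decide (p ≤ x) = true} ∩ T p ⁻¹' (dig p ⁻¹' cyl t))
            ∩ Set.Ico 0 1
            = (fun x => (x - p) / (1 - p)) ⁻¹' ((dig p ⁻¹' cyl t) ∩ Set.Ico 0 1) := by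
          ext x
          simp only [Set.mem_inter_iff, Set.mem_setOf_eq, Set.mem_preimage, Set.mem_Ico,
            decide_eq_true_eq]
          constructor
          · rintro ⟨⟨hxp, hTx⟩, _, hx1⟩
            have hT : T p x = (x - p) / (1 - p) := if_neg (not_lt.2 hxp)
            exact ⟨by rwa [hT] at hTx, div_nonneg (by linarith) h1.le,
              (div_lt_one h1).2 (by linarith)⟩
          · rintro ⟨hD, hd0, hd1⟩
            have hxp : p ≤ x := by
              by_contra hx
              push_neg at hx
              have : (x - p) / (1 - p) < 0 := div_neg_of_neg_of_pos (by linarith) h1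
              linarith
            have hx1 : x < 1 := by
              have := (div_lt_one h1).1 hd1
              linarith
            have hT : T p x = (x - p) / (1 - p) := if_neg (not_lt.2 hxp)
            exact ⟨⟨hxp, by rwa [hT]⟩, by linarith, hx1⟩
        rw [hset, volume_preimage_affine h1, ih]
        simp
    rw [key, ← ENNReal.ofReal_mul (by positivity)]
    congr 1
    rw [List.length_cons, Finset.prod_range_succ']
    simp [List.getD_cons_succ, List.getD_cons_zero, mul_comm]

end Stmt18Aux

namespace Stmt18Aux

lemma ber_cyl {p : ℝ} (hp : p ∈ Set.Ioo (0:ℝ) 1) (s : List Bool) :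
    ber p (cyl s) =
      ENNReal.ofReal (∏ k ∈ Finset.range s.length, (if s.getD k false then 1 - p else p)) := by
  rw [ber, Measure.map_apply (measurable_dig p) (measurableSet_cyl s),
    Measure.restrict_apply (measurable_dig p (measurableSet_cyl s))]
  exact volume_dig_cyl hp s

lemma cyl_nil : cyl [] = Set.univ := by
  ext x; simp [cyl]

lemma ber_isProbability {p : ℝ} (hp : p ∈ Set.Ioo (0:ℝ) 1) :
    IsProbabilityMeasure (ber p) := by
  constructor
  rw [← cyl_nil, ber_cyl hp]
  simp

/-- The one-coordinate Bernoulli measure on `Bool`. -/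
def bb (p : ℝ) : Measure Bool :=
  ENNReal.ofReal p • Measure.dirac false + ENNReal.ofReal (1 - p) • Measure.dirac true

lemma bb_singleton (p : ℝ) (b : Bool) :
    bb p {b} = ENNReal.ofReal (if b then 1 - p else p) := by
  cases b <;> simp [bb, Measure.dirac_apply]

lemma bb_isProbability {p : ℝ} (hp : p ∈ Set.Ioo (0:ℝ) 1) :
    IsProbabilityMeasure (bb p) := by
  constructor
  have : (Set.univ : Set Bool) = {false} ∪ {true} := by
    ext b; cases b <;> simp
  rw [this, measure_union (by simp) (measurableSet_singleton _), bb_singleton, bb_singleton]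
  norm_num
  rw [← ENNReal.ofReal_add (by linarith [hp.1]) (by linarith [hp.2])]
  norm_num

/-- The finite-dimensional distributions of `ber p` are iid product measures. -/
lemma ber_map_proj {p : ℝ} (hp : p ∈ Set.Ioo (0:ℝ) 1) (n : ℕ) :
    Measure.map (fun (x : ℕ → Bool) (i : Fin n) => x i) (ber p)
      = Measure.pi (fun _ : Fin n => bb p) := by
  haveI : IsProbabilityMeasure (bb p) := bb_isProbability hp
  haveI : MeasurableSingletonClass (Fin n → Bool) := by infer_instance
  rw [Measure.ext_iff_singleton]
  intro y
  have hproj : Measurable (fun (x : ℕ → Bool) (i : Fin n) => x i) :=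
    measurable_pi_lambda _ fun i => measurable_pi_apply _
  have hpre : (fun (x : ℕ → Bool) (i : Fin n) => x i) ⁻¹' {y} = cyl (List.ofFn y) := by
    ext x
    simp only [Set.mem_preimage, Set.mem_singleton_iff, funext_iff, cyl, Set.mem_setOf_eq,
      List.length_ofFn]
    constructor
    · intro h i hi
      rw [List.getD_eq_getElem _ _ (by simpa using hi)]
      simp only [List.getElem_ofFn]
      exact h ⟨i, hi⟩
    · intro h i
      have := h i i.isLt
      rw [List.getD_eq_getElem _ _ (by simpa using i.isLt)] at this
      simpa using this
  rw [Measure.map_apply hproj (measurableSet_singleton y), hpre, ber_cyl hp,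
    ← Set.univ_pi_singleton, Measure.pi_pi]
  rw [ENNReal.ofReal_prod_of_nonneg (fun i _ => by have := hp.1; have := hp.2; split <;> linarith)]
  rw [List.length_ofFn, ← Fin.prod_univ_eq_prod_range
    (fun k => ENNReal.ofReal (if (List.ofFn y).getD k false then 1 - p else p)) n]
  refine Finset.prod_congr rfl fun i _ => ?_
  rw [bb_singleton]
  congr 2
  rw [List.getD_eq_getElem _ _ (by simpa using i.isLt)]
  simp

end Stmt18Aux

namespace Stmt18Aux

lemma measurableSet_bool (s : Set Bool) : MeasurableSet s := s.to_countable.measurableSet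

lemma ber_joint {p : ℝ} (hp : p ∈ Set.Ioo (0:ℝ) 1) (n : ℕ) (t : Fin n → Set Bool) :
    ber p {x : ℕ → Bool | ∀ i : Fin n, x (i : ℕ) ∈ t i} = ∏ i, bb p (t i) := by
  haveI := bb_isProbability hp
  have hproj : Measurable (fun (x : ℕ → Bool) (i : Fin n) => x i) :=
    measurable_pi_lambda _ fun i => measurable_pi_apply _
  have hset : {x : ℕ → Bool | ∀ i : Fin n, x (i : ℕ) ∈ t i}
      = (fun (x : ℕ → Bool) (i : Fin n) => x i) ⁻¹' (Set.univ.pi t) := by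
    ext x; simp [Set.mem_univ_pi]
  rw [hset, ← Measure.map_apply hproj (MeasurableSet.univ_pi fun i => measurableSet_bool _),
    ber_map_proj hp, Measure.pi_pi]

lemma ber_eval {p : ℝ} (hp : p ∈ Set.Ioo (0:ℝ) 1) (i : ℕ) (s : Set Bool) :
    ber p ((fun x : ℕ → Bool => x i) ⁻¹' s) = bb p s := by
  haveI := bb_isProbability hp
  have h := ber_joint hp (i + 1) (fun j => if j = Fin.last i then s else Set.univ)
  have hset : {x : ℕ → Bool | ∀ j : Fin (i + 1),
      x (j : ℕ) ∈ (if j = Fin.last i then s else Set.univ)}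
      = (fun x : ℕ → Bool => x i) ⁻¹' s := by
    ext x
    simp only [Set.mem_setOf_eq, Set.mem_preimage]
    constructor
    · intro h
      have := h (Fin.last i)
      simpa [Fin.val_last] using this
    · intro hx j
      by_cases hj : j = Fin.last i
      · subst hj; simpa [Fin.val_last] using hx
      · simp [hj]
  rw [hset] at h
  rw [h]
  have hval : ∀ j : Fin (i + 1), bb p (if j = Fin.last i then s else Set.univ)
      = if j = Fin.last i then bb p s else 1 := by
    intro j; split
    · rfl
    · exact measure_univ
  rw [Finset.prod_congr rfl fun j _ => hval j, Finset.prod_ite_eq']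
  simp

lemma ber_eval_pair {p : ℝ} (hp : p ∈ Set.Ioo (0:ℝ) 1) {i j : ℕ} (hij : i ≠ j)
    (s u : Set Bool) :
    ber p ((fun x : ℕ → Bool => x i) ⁻¹' s ∩ (fun x : ℕ → Bool => x j) ⁻¹' u)
      = bb p s * bb p u := by
  haveI := bb_isProbability hp
  set n := max i j + 1 with hn
  have hi : i < n := Nat.lt_succ_of_le (le_max_left _ _)
  have hj : j < n := Nat.lt_succ_of_le (le_max_right _ _)
  set a : Fin n := ⟨i, hi⟩ with ha
  set b : Fin n := ⟨j, hj⟩ with hb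
  have hab : a ≠ b := by simp [ha, hb, Fin.ext_iff, hij]
  have h := ber_joint hp n (fun k => if k = a then s else if k = b then u else Set.univ)
  have hset : {x : ℕ → Bool | ∀ k : Fin n,
      x (k : ℕ) ∈ (if k = a then s else if k = b then u else Set.univ)}
      = (fun x : ℕ → Bool => x i) ⁻¹' s ∩ (fun x : ℕ → Bool => x j) ⁻¹' u := by
    ext x
    simp only [Set.mem_setOf_eq, Set.mem_inter_iff, Set.mem_preimage]
    constructor
    · intro h
      refine ⟨?_, ?_⟩
      · have := h a; simpa [ha] using this
      · have := h b; simpa [hb, if_neg hab.symm, ha, Ne.symm hij] using this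
    · rintro ⟨h1, h2⟩ k
      by_cases hka : k = a
      · subst hka; simpa [ha] using h1
      · by_cases hkb : k = b
        · subst hkb; simpa [hb, if_neg hka, ha, Ne.symm hij] using h2
        · simp [hka, hkb]
  rw [hset] at h
  rw [h]
  have hval : ∀ k : Fin n, bb p (if k = a then s else if k = b then u else Set.univ)
      = if k = a then bb p s else if k = b then bb p u else 1 := by
    intro k; split
    · rfl
    · split
      · rfl
      · exact measure_univ
  rw [Finset.prod_congr rfl fun k _ => hval k]
  rw [← Finset.prod_subset (Finset.subset_univ ({a, b} : Finset (Fin n)))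
    (fun k _ hk => by
      simp only [Finset.mem_insert, Finset.mem_singleton, not_or] at hk
      simp [hk.1, hk.2])]
  rw [Finset.prod_pair hab]
  simp [hab, if_neg hab.symm]

lemma indep_coords {p : ℝ} (hp : p ∈ Set.Ioo (0:ℝ) 1) {i j : ℕ} (hij : i ≠ j) :
    ProbabilityTheory.IndepFun (fun x : ℕ → Bool => x i) (fun x : ℕ → Bool => x j) (ber p) := by
  rw [ProbabilityTheory.indepFun_iff_measure_inter_preimage_eq_mul]
  intro s u _ _
  rw [ber_eval_pair hp hij, ber_eval hp, ber_eval hp]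

end Stmt18Aux

namespace Stmt18Aux

/-- Coordinate indicator random variables. -/
def XI (i : ℕ) : (ℕ → Bool) → ℝ := fun x => if x i then 1 else 0

lemma XI_eq (i : ℕ) : XI i = (fun b : Bool => if b then (1:ℝ) else 0) ∘ (fun x : ℕ → Bool => x i) :=
  rfl

lemma measurable_XI (i : ℕ) : Measurable (XI i) := by
  rw [XI_eq]
  exact measurable_from_top.comp (measurable_pi_apply i)

lemma map_eval {p : ℝ} (hp : p ∈ Set.Ioo (0:ℝ) 1) (i : ℕ) :
    Measure.map (fun x : ℕ → Bool => x i) (ber p) = bb p := by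
  ext s hs
  rw [Measure.map_apply (measurable_pi_apply i) hs, ber_eval hp]

lemma integrable_XI {p : ℝ} (hp : p ∈ Set.Ioo (0:ℝ) 1) (i : ℕ) :
    Integrable (XI i) (ber p) := by
  haveI := ber_isProbability hp
  refine (integrable_const (1:ℝ)).mono' (measurable_XI i).aestronglyMeasurable
    (ae_of_all _ fun x => ?_)
  by_cases h : x i <;> simp [XI, h]

lemma integral_XI {p : ℝ} (hp : p ∈ Set.Ioo (0:ℝ) 1) :
    ∫ x, XI 0 x ∂(ber p) = 1 - p := by
  have hXI : XI 0 = Set.indicator ((fun x : ℕ → Bool => x 0) ⁻¹' {true}) (fun _ => (1:ℝ)) := by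
    funext x
    by_cases h : x 0 <;> simp [XI, Set.indicator_apply, h]
  rw [hXI, integral_indicator_const (1:ℝ)
    (measurable_pi_apply 0 (measurableSet_singleton true)), measureReal_def, ber_eval hp, bb_singleton]
  simp only [if_true, smul_eq_mul, mul_one]
  exact ENNReal.toReal_ofReal (by linarith [hp.2])

lemma identDistrib_XI {p : ℝ} (hp : p ∈ Set.Ioo (0:ℝ) 1) (i : ℕ) :
    ProbabilityTheory.IdentDistrib (XI i) (XI 0) (ber p) (ber p) := by
  refine ⟨(measurable_XI i).aemeasurable, (measurable_XI 0).aemeasurable, ?_⟩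
  rw [XI_eq, XI_eq,
    ← Measure.map_map measurable_from_top (measurable_pi_apply i),
    ← Measure.map_map measurable_from_top (measurable_pi_apply 0),
    map_eval hp, map_eval hp]

lemma ber_ae_tendsto {p : ℝ} (hp : p ∈ Set.Ioo (0:ℝ) 1) :
    ∀ᵐ x ∂(ber p), Filter.Tendsto (fun n : ℕ => (∑ i ∈ Finset.range n, XI i x) / n)
      Filter.atTop (nhds (1 - p)) := by
  haveI := ber_isProbability hp
  have h := ProbabilityTheory.strong_law_ae_real XI (integrable_XI hp 0)
    (fun i j hij => by
      show ProbabilityTheory.IndepFun (XI i) (XI j) (ber p)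
      rw [XI_eq i, XI_eq j]
      exact (indep_coords hp hij).comp measurable_from_top measurable_from_top)
    (fun i => identDistrib_XI hp i)
  simpa [integral_XI hp] using h

/-- The set of points with asymptotic digit frequency corresponding to `p`. -/
def S (p : ℝ) : Set (ℕ → Bool) :=
  {x | Filter.Tendsto (fun n : ℕ => (∑ i ∈ Finset.range n, XI i x) / n)
    Filter.atTop (nhds (1 - p))}

lemma measurableSet_S (p : ℝ) : MeasurableSet (S p) :=
  measurableSet_tendsto _ fun n =>
    (Finset.measurable_sum _ fun i _ => measurable_XI i).div_const _

lemma ber_compl_S {p : ℝ} (hp : p ∈ Set.Ioo (0:ℝ) 1) : ber p (S p)ᶜ = 0 := by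
  have h := ber_ae_tendsto hp
  rw [MeasureTheory.ae_iff] at h
  exact h

lemma disjoint_S : Pairwise (Function.onFun Disjoint S) := by
  intro p q hpq
  refine Set.disjoint_left.2 fun x hxp hxq => hpq ?_
  have := tendsto_nhds_unique hxp hxq
  linarith

lemma ber_singleton {p : ℝ} (hp : p ∈ Set.Ioo (0:ℝ) 1) (x : ℕ → Bool) :
    ber p {x} = 0 := by
  set m : ℝ := max p (1 - p) with hm
  have hm0 : 0 ≤ m := le_trans hp.1.le (le_max_left _ _)
  have hm1 : m < 1 := max_lt hp.2 (by linarith [hp.1])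
  have hb : ∀ n : ℕ, ber p {x} ≤ ENNReal.ofReal (m ^ n) := by
    intro n
    have hsub : {x} ⊆ cyl (List.ofFn (fun i : Fin n => x i)) := by
      rintro y hy
      rw [Set.mem_singleton_iff] at hy
      subst hy
      intro i hi
      rw [List.getD_eq_getElem _ _ (by simpa using hi)]
      simp
    calc ber p {x} ≤ ber p (cyl (List.ofFn (fun i : Fin n => x i))) := measure_mono hsub
      _ = ENNReal.ofReal (∏ k ∈ Finset.range (List.ofFn (fun i : Fin n => x i)).length,
          (if (List.ofFn (fun i : Fin n => x i)).getD k false then 1 - p else p)) :=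
        ber_cyl hp _
      _ ≤ ENNReal.ofReal (m ^ n) := by
        refine ENNReal.ofReal_le_ofReal ?_
        rw [List.length_ofFn]
        calc (∏ k ∈ Finset.range n,
            (if (List.ofFn (fun i : Fin n => x i)).getD k false then 1 - p else p))
            ≤ ∏ _k ∈ Finset.range n, m := by
              refine Finset.prod_le_prod (fun k _ => ?_) (fun k _ => ?_)
              · split <;> linarith [hp.1, hp.2]
              · split
                · exact le_max_right _ _
                · exact le_max_left _ _
          _ = m ^ n := by rw [Finset.prod_const, Finset.card_range]
  have htend : Filter.Tendsto (fun n : ℕ => ENNReal.ofReal (m ^ n)) Filter.atTop (nhds 0) := by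
    have h1 : Filter.Tendsto (fun n : ℕ => m ^ n) Filter.atTop (nhds 0) :=
      tendsto_pow_atTop_nhds_zero_of_lt_one hm0 hm1
    have := (ENNReal.continuous_ofReal.tendsto 0).comp h1
    simpa [Function.comp_def] using this
  exact le_antisymm (ge_of_tendsto' htend hb) zero_le

end Stmt18Aux

end Stmt18Aux

open Stmt18Aux in
/-- A pairwise orthogonal family of non-atomic probability measures of size less
than the continuum is not maximal: some non-atomic Bernoulli product measure is
orthogonal to every member. -/
theorem stmt18 (A : Set (Measure (ℕ → Bool)))
    (hprob : ∀ μ ∈ A, IsProbabilityMeasure μ)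
    (hna : ∀ μ ∈ A, ∀ x : ℕ → Bool, μ {x} = 0)
    (horth : A.Pairwise (· ⟂ₘ ·))
    (hcard : Cardinal.mk A < Cardinal.continuum) :
    ∃ ν : Measure (ℕ → Bool), IsProbabilityMeasure ν ∧
      (∀ x : ℕ → Bool, ν {x} = 0) ∧
      (∃ a : ℕ → ℝ, (∀ k, a k ∈ Set.Icc (0:ℝ) 1) ∧
        ∀ s : List Bool, ν (cyl s) =
          ENNReal.ofReal (∏ k ∈ Finset.range s.length,
            (if s.getD k false then 1 - a k else a k))) ∧
      ∀ μ ∈ A, ν ⟂ₘ μ := by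
  classical
  set Bad : Set ℝ := ⋃ μ : A, {p : ℝ | 0 < (μ : Measure (ℕ → Bool)) (S p)} with hBad
  have hBadcard : Cardinal.mk Bad < Cardinal.continuum := by
    have h1 : Cardinal.mk Bad ≤ Cardinal.mk A * ⨆ μ : A,
        Cardinal.mk {p : ℝ | 0 < (μ : Measure (ℕ → Bool)) (S p)} := by
      exact Cardinal.mk_iUnion_le (fun μ : A => {p : ℝ | 0 < (μ : Measure (ℕ → Bool)) (S p)})
    have h2 : (⨆ μ : A, Cardinal.mk {p : ℝ | 0 < (μ : Measure (ℕ → Bool)) (S p)})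
        ≤ Cardinal.aleph0 := by
      refine ciSup_le' fun μ => ?_
      haveI := hprob μ μ.2
      have hc : Set.Countable {p : ℝ | 0 < (μ : Measure (ℕ → Bool)) (S p)} :=
        Measure.countable_meas_pos_of_disjoint_iUnion (fun p => measurableSet_S p) disjoint_S
      exact hc.le_aleph0
    calc Cardinal.mk Bad ≤ Cardinal.mk A * Cardinal.aleph0 :=
          h1.trans (mul_le_mul_right h2 _)
      _ < Cardinal.continuum :=
          Cardinal.mul_lt_of_lt Cardinal.aleph0_le_continuum hcard Cardinal.aleph0_lt_continuum
  have hnsub : ¬ (Set.Ioo (0:ℝ) 1 ⊆ Bad) := by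
    intro hsub
    have := (Cardinal.mk_le_mk_of_subset hsub).trans_lt hBadcard
    rw [Cardinal.mk_Ioo_real zero_lt_one] at this
    exact lt_irrefl _ this
  obtain ⟨p, hpIoo, hpBad⟩ := Set.not_subset.1 hnsub
  refine ⟨ber p, ber_isProbability hpIoo, ber_singleton hpIoo, ?_, ?_⟩
  · exact ⟨fun _ => p, fun k => ⟨hpIoo.1.le, hpIoo.2.le⟩, fun s => by
      simpa using ber_cyl hpIoo s⟩
  · intro μ hμ
    have hμS : μ (S p) = 0 := by
      by_contra h0
      exact hpBad (Set.mem_iUnion.2 ⟨⟨μ, hμ⟩, pos_iff_ne_zero.2 h0⟩)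
    exact ⟨(S p)ᶜ, (measurableSet_S p).compl, ber_compl_S hpIoo, by rwa [compl_compl]⟩
end
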